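/- arXiv:2412.01660 — 2 statements merged into one kernel-verified Lean document; each statement's English description precedes it below -/
import Mathlib

section
/- (Voronoi meshes are omnidirectionally acyclic.) Let d ≥ 1, let ι be a finite index set, let v : ι → ℝ^d be an injective family of points (Voronoi centres), and let ω ∈ ℝ^d be any flow direction. Define the directed dual relation E on ι by: E i j holds if and only if i ≠ j, the closures of the Voronoi cells T_i and T_j intersect (i.e. the cells are neighbours sharing a boundary), and ⟪ω, v_j − v_i⟫ > 0 (i.e. T_i is upwind of T_j with respect to ω). Then E has no directed cycle: there is no integer m ≥ 1 and no function f : ℕ → ι with f(m) = f(0) such that E (f(k)) (f(k+1)) holds for every k < m. -/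
/-- The Voronoi cell of index `i`: points strictly closer to `v i` than to all other centres. -/
def voronoiCell {d : ℕ} {ι : Type*} (v : ι → EuclideanSpace ℝ (Fin d)) (i : ι) :
    Set (EuclideanSpace ℝ (Fin d)) :=
  {x | ∀ j, j ≠ i → dist x (v i) < dist x (v j)}

theorem not_exists_cycle_of_map_lt {α β : Type*} [Preorder β] {r : α → α → Prop} (φ : α → β)
    (hφ : ∀ a b, r a b → φ a < φ b) :
    ¬ ∃ (m : ℕ) (f : ℕ → α), 1 ≤ m ∧ f m = f 0 ∧ ∀ k < m, r (f k) (f (k + 1)) := by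
  rintro ⟨m, f, hm, hcycle, hstep⟩
  have hmono : StrictMonoOn (φ ∘ f) (Set.Iic m) :=
    strictMonoOn_Iic_of_lt_succ fun k hk ↦ hφ _ _ (hstep k hk)
  have hlt : φ (f 0) < φ (f m) := hmono (Set.mem_Iic.2 m.zero_le) Set.self_mem_Iic hm
  exact hlt.ne (by rw [hcycle])

theorem voronoi_directed_dual_acyclic_general
    (d : ℕ) (ι : Type*)
    (v : ι → EuclideanSpace ℝ (Fin d))
    (ω : EuclideanSpace ℝ (Fin d))
    (E : ι → ι → Prop)
    (hE : ∀ i j, E i j ↔ i ≠ j ∧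
      (closure (voronoiCell v i) ∩ closure (voronoiCell v j)).Nonempty ∧
      0 < (inner ℝ ω (v j - v i) : ℝ)) :
    ¬ ∃ (m : ℕ) (f : ℕ → ι), 1 ≤ m ∧ f m = f 0 ∧ ∀ k < m, E (f k) (f (k + 1)) := by
  refine not_exists_cycle_of_map_lt (fun i ↦ (inner ℝ ω (v i) : ℝ)) fun i j hij ↦ ?_
  have hupwind := ((hE i j).1 hij).2.2
  rwa [inner_sub_right, sub_pos] at hupwind

/-- Voronoi meshes are omnidirectionally acyclic: for any flow direction `ω`, the
directed dual relation of a Voronoi tessellation has no directed cycle. -/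
theorem voronoi_directed_dual_acyclic
    (d : ℕ) (hd : 1 ≤ d) (ι : Type*) [Finite ι]
    (v : ι → EuclideanSpace ℝ (Fin d)) (hv : Function.Injective v)
    (ω : EuclideanSpace ℝ (Fin d))
    (E : ι → ι → Prop)
    (hE : ∀ i j, E i j ↔ i ≠ j ∧
      (closure (voronoiCell v i) ∩ closure (voronoiCell v j)).Nonempty ∧
      0 < (inner ℝ ω (v j - v i) : ℝ)) :
    ¬ ∃ (m : ℕ) (f : ℕ → ι), 1 ≤ m ∧ f m = f 0 ∧ ∀ k < m, E (f k) (f (k + 1)) :=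
  voronoi_directed_dual_acyclic_general d ι v ω E hE
end

section
/- (Subdomain sweeps.) Let d ≥ 1, let ι be a finite index set, let v : ι → ℝ^d be an injective family of Voronoi centres, let ω ∈ ℝ^d, and let S ⊆ ι be any subset of indices. Define the directed dual relation E on ι by: E i j holds if and only if i ≠ j, the closures of the Voronoi cells T_i and T_j intersect, and ⟪ω, v_j − v_i⟫ > 0. Then the restriction of E to S admits a topological sort: there exists a strict linear order < on S such that for all i, j ∈ S, E i j implies i < j. In particular, sweeping is possible on any subdomain consisting of a subset of the cells of a Voronoi tessellation, even when some Voronoi centres lie outside the subdomain. -/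
/-!
The geometry of the cells plays no role: along every upwind edge `i → j` the height
`⟪ω, v ·⟫` strictly increases, so ordering the cells by height, with ties broken by an
arbitrary well-order, is a topological sort of the upwind relation on any set of cells.
-/

theorem exists_linearOrder_extending_of_potential {α β : Type*} [LinearOrder β]
    (f : α → β) (r : α → α → Prop) (hr : ∀ a b, r a b → f a < f b) :
    ∃ _ : LinearOrder α, ∀ a b, r a b → a < b := by
  classical
  let _ : LinearOrder α := linearOrderOfSTO WellOrderingRel
  let g : α → β ×ₗ α := fun a => toLex (f a, a)
  have hg : Function.Injective g := fun a b hab => congrArg (fun p => (ofLex p).2) hab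
  exact ⟨LinearOrder.lift' g hg, fun a b hab => Prod.Lex.toLex_lt_toLex.mpr (Or.inl (hr a b hab))⟩

theorem inner_lt_inner_of_inner_sub_pos {E : Type*} [NormedAddCommGroup E]
    [InnerProductSpace ℝ E] {ω x y : E} (h : 0 < inner ℝ ω (y - x)) :
    inner ℝ ω x < inner ℝ ω y := by
  rwa [inner_sub_right, sub_pos] at h

theorem voronoi_subdomain_topological_sort_general
    (d : ℕ) (ι : Type*)
    (v : ι → EuclideanSpace ℝ (Fin d))
    (ω : EuclideanSpace ℝ (Fin d)) (S : Set ι)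
    (E : ι → ι → Prop)
    (hE : ∀ i j, E i j ↔ i ≠ j ∧
      (closure (voronoiCell v i) ∩ closure (voronoiCell v j)).Nonempty ∧
      0 < (inner ℝ ω (v j - v i) : ℝ)) :
    ∃ _lin : LinearOrder S, ∀ i j : S, E i j → i < j :=
  exists_linearOrder_extending_of_potential (fun i : S => inner ℝ ω (v i))
    (fun i j : S => E i j) fun i j hij => inner_lt_inner_of_inner_sub_pos ((hE i j).mp hij).2.2

/-- Subdomain sweeps: the restriction of the directed dual relation to any subset of
the cells of a Voronoi tessellation admits a topological sort. -/
theorem voronoi_subdomain_topological_sort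
    (d : ℕ) (hd : 1 ≤ d) (ι : Type*) [Finite ι]
    (v : ι → EuclideanSpace ℝ (Fin d)) (hv : Function.Injective v)
    (ω : EuclideanSpace ℝ (Fin d)) (S : Set ι)
    (E : ι → ι → Prop)
    (hE : ∀ i j, E i j ↔ i ≠ j ∧
      (closure (voronoiCell v i) ∩ closure (voronoiCell v j)).Nonempty ∧
      0 < (inner ℝ ω (v j - v i) : ℝ)) :
    ∃ _lin : LinearOrder S, ∀ i j : S, E i j → i < j :=
  voronoi_subdomain_topological_sort_general d ι v ω S E hE
end
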